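/- arXiv:1610.00116 — 3 statements merged into one kernel-verified Lean document; each statement's English description precedes it below -/
import Mathlib

section
/- Let r, z be odd natural numbers and define N_0 = 1, N_1 = r + z, N_i = (r+z-1)N_{i-1} + z N_{i-2} for i ≥ 2. If k ≡ 2 (mod 3), then the sum M(r,z,k) = N_0 + N_1 + ... + N_k is even. -/
/-- For odd `r`, `z` and `k ≡ 2 (mod 3)`, the Moore bound
`M(r,z,k) = ∑_{i=0}^k N i` is even. -/
theorem stmt_2 (r z : ℕ) (hr : Odd r) (hz : Odd z) (k : ℕ) (hk : k % 3 = 2)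
    (N : ℕ → ℕ)
    (hN0 : N 0 = 1) (hN1 : N 1 = r + z)
    (hN : ∀ i, N (i + 2) = (r + z - 1) * N (i + 1) + z * N i) :
    Even (∑ i ∈ Finset.range (k + 1), N i) := by
  obtain ⟨a, ha⟩ := hr
  obtain ⟨b, hb⟩ := hz
  -- recurrence mod 2: N(i+2) ≡ N(i+1) + N(i)
  have hrec : ∀ i, N (i + 2) % 2 = (N (i + 1) + N i) % 2 := by
    intro i
    obtain ⟨c, hc⟩ : ∃ c, r + z - 1 = 2 * c + 1 := ⟨(r + z - 1) / 2, by omega⟩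
    rw [hN i, hc, hb,
      show (2*c+1) * N (i+1) + (2*b+1) * N i
        = 2 * (c * N (i+1) + b * N i) + (N (i+1) + N i) by ring]
    omega
  have key : ∀ i, N (3*i) % 2 = 1 ∧ N (3*i+1) % 2 = 0 ∧ N (3*i+2) % 2 = 1 := by
    intro i
    induction i with
    | zero =>
      have h2 := hrec 0
      simp only [Nat.mul_zero, Nat.zero_add] at *
      omega
    | succ n ih =>
      obtain ⟨h0, h1, h2⟩ := ih
      have e3 := hrec (3*n+1)
      have e4 := hrec (3*n+2)
      have e5 := hrec (3*n+3)
      rw [show 3*n+1+2 = 3*n+3 by ring, show 3*n+1+1 = 3*n+2 by ring] at e3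
      rw [show 3*n+2+2 = 3*n+4 by ring, show 3*n+2+1 = 3*n+3 by ring] at e4
      rw [show 3*n+3+2 = 3*n+5 by ring, show 3*n+3+1 = 3*n+4 by ring] at e5
      refine ⟨?_, ?_, ?_⟩
      · rw [show 3*(n+1) = 3*n+3 by ring]; omega
      · rw [show 3*(n+1)+1 = 3*n+4 by ring]; omega
      · rw [show 3*(n+1)+2 = 3*n+5 by ring]; omega
  obtain ⟨m, hm⟩ : ∃ m, k = 3*m + 2 := ⟨k / 3, by omega⟩
  subst hm
  have main : ∀ m, Even (∑ i ∈ Finset.range (3*m + 3), N i) := by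
    intro m
    induction m with
    | zero =>
      simp only [Nat.mul_zero, Nat.zero_add]
      rw [Finset.sum_range_succ, Finset.sum_range_succ, Finset.sum_range_one]
      obtain ⟨p0, p1, p2⟩ := key 0
      simp only [Nat.mul_zero, Nat.zero_add] at p0 p1 p2
      rw [Nat.even_iff]; omega
    | succ n ih =>
      rw [show 3*(n+1) + 3 = (3*n+3) + 1 + 1 + 1 by ring,
        Finset.sum_range_succ, Finset.sum_range_succ, Finset.sum_range_succ,
        show 3*n+3+1+1 = 3*n+5 by ring, show 3*n+3+1 = 3*n+4 by ring]
      obtain ⟨p0, p1, p2⟩ := key (n+1)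
      rw [show 3*(n+1) = 3*n+3 by ring] at p0
      rw [show 3*(n+1)+1 = 3*n+4 by ring] at p1
      rw [show 3*(n+1)+2 = 3*n+5 by ring] at p2
      rw [Nat.even_iff] at ih ⊢
      omega
  rw [show 3*m+2+1 = 3*m+3 by ring]
  exact main m
end

section
/- Let r, z be real numbers with v = (z+r)^2 + 2(z-r) + 1 > 0, and assume u_1 ≠ 1 and u_2 ≠ 1 where u_1 = (z+r-1-√v)/2, u_2 = (z+r-1+√v)/2. With A = (√v - (z+r+1))/(2√v) and B = (√v + (z+r+1))/(2√v), and N_i defined by N_0 = 1, N_1 = r+z, N_i = (r+z-1)N_{i-1} + z N_{i-2}, we have for all k ≥ 0: N_0 + N_1 + ... + N_k = A·(u_1^{k+1} - 1)/(u_1 - 1) + B·(u_2^{k+1} - 1)/(u_2 - 1). -/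
/-- Closed form of the Moore bound:
`∑_{i=0}^k N i = A (u₁^{k+1} - 1)/(u₁ - 1) + B (u₂^{k+1} - 1)/(u₂ - 1)`. -/
theorem stmt_7 (r z : ℝ) (v u₁ u₂ A B : ℝ)
    (hv : v = (z + r) ^ 2 + 2 * (z - r) + 1) (hvpos : 0 < v)
    (hu₁ : u₁ = (z + r - 1 - Real.sqrt v) / 2)
    (hu₂ : u₂ = (z + r - 1 + Real.sqrt v) / 2)
    (hu₁ne : u₁ ≠ 1) (hu₂ne : u₂ ≠ 1)
    (hA : A = (Real.sqrt v - (z + r + 1)) / (2 * Real.sqrt v))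
    (hB : B = (Real.sqrt v + (z + r + 1)) / (2 * Real.sqrt v))
    (N : ℕ → ℝ)
    (hN0 : N 0 = 1) (hN1 : N 1 = r + z)
    (hN : ∀ i, N (i + 2) = (r + z - 1) * N (i + 1) + z * N i) :
    ∀ k, ∑ i ∈ Finset.range (k + 1), N i =
      A * (u₁ ^ (k + 1) - 1) / (u₁ - 1) + B * (u₂ ^ (k + 1) - 1) / (u₂ - 1) := by
  have hs2 : Real.sqrt v ^ 2 = v := Real.sq_sqrt hvpos.le
  have hsne : Real.sqrt v ≠ 0 := by positivity
  have hsum : u₁ + u₂ = z + r - 1 := by rw [hu₁, hu₂]; ring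
  have hprod : u₁ * u₂ = -z := by
    rw [hu₁, hu₂]
    have : ((z + r - 1 - Real.sqrt v) / 2) * ((z + r - 1 + Real.sqrt v) / 2)
        = ((z + r - 1) ^ 2 - Real.sqrt v ^ 2) / 4 := by ring
    rw [this, hs2, hv]; ring
  have hAB : A + B = 1 := by
    rw [hA, hB]; field_simp; ring
  have hAB1 : A * u₁ + B * u₂ = r + z := by
    rw [hA, hB, hu₁, hu₂]
    field_simp
    nlinarith [hs2]
  have hcl : ∀ i, N i = A * u₁ ^ i + B * u₂ ^ i := by
    intro i
    induction i using Nat.twoStepInduction with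
    | zero => simpa [hN0] using hAB.symm
    | one => simpa [hN1] using hAB1.symm
    | more n ih1 ih2 =>
      rw [hN, ih1, ih2]
      have h1 : u₁ ^ (n + 2) = (u₁ + u₂) * u₁ ^ (n + 1) - (u₁ * u₂) * u₁ ^ n := by ring
      have h2 : u₂ ^ (n + 2) = (u₁ + u₂) * u₂ ^ (n + 1) - (u₁ * u₂) * u₂ ^ n := by ring
      rw [h1, h2, hsum, hprod]; ring
  intro k
  have hg1 : ∑ i ∈ Finset.range (k + 1), u₁ ^ i = (u₁ ^ (k + 1) - 1) / (u₁ - 1) :=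
    geom_sum_eq hu₁ne _
  have hg2 : ∑ i ∈ Finset.range (k + 1), u₂ ^ i = (u₂ ^ (k + 1) - 1) / (u₂ - 1) :=
    geom_sum_eq hu₂ne _
  calc ∑ i ∈ Finset.range (k + 1), N i
      = ∑ i ∈ Finset.range (k + 1), (A * u₁ ^ i + B * u₂ ^ i) := by
        exact Finset.sum_congr rfl fun i _ => hcl i
    _ = A * ∑ i ∈ Finset.range (k + 1), u₁ ^ i
        + B * ∑ i ∈ Finset.range (k + 1), u₂ ^ i := by
        rw [Finset.sum_add_distrib, Finset.mul_sum, Finset.mul_sum]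
    _ = A * (u₁ ^ (k + 1) - 1) / (u₁ - 1) + B * (u₂ ^ (k + 1) - 1) / (u₂ - 1) := by
        rw [hg1, hg2]; ring
end

section
/- Define N_i by N_0 = 1, N_1 = d, N_i = (d-1)N_{i-1} + z N_{i-2} for i ≥ 2, where d = r + z with natural numbers r, z. For fixed d ≥ 1 and fixed k ≥ 2, the Moore bound M(r,z,k) = sum_{i=0}^k N_i is strictly increasing in z for 0 ≤ z ≤ d (with r = d - z). In particular, the maximum over all splits r + z = d is attained at z = d, r = 0. -/
/-- For fixed total degree `d ≥ 1` and diameter `k ≥ 2`, the Moore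
bound `M(d-z, z, k) = ∑_{i=0}^k N z i` is strictly increasing in `z` for
`0 ≤ z ≤ d`; in particular it is maximized at `z = d`, `r = 0`. -/
theorem stmt_9 (d : ℕ) (hd : 1 ≤ d) (k : ℕ) (hk : 2 ≤ k)
    (N : ℕ → ℕ → ℕ)
    (hN0 : ∀ z, N z 0 = 1) (hN1 : ∀ z, N z 1 = d)
    (hN : ∀ z i, N z (i + 2) = (d - 1) * N z (i + 1) + z * N z i) :
    (∀ z₁ z₂, z₁ < z₂ → z₂ ≤ d →
      ∑ i ∈ Finset.range (k + 1), N z₁ i < ∑ i ∈ Finset.range (k + 1), N z₂ i) ∧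
    (∀ z, z ≤ d →
      ∑ i ∈ Finset.range (k + 1), N z i ≤ ∑ i ∈ Finset.range (k + 1), N d i) := by
  have mono : ∀ z₁ z₂, z₁ ≤ z₂ → ∀ i, N z₁ i ≤ N z₂ i := by
    intro z₁ z₂ hz i
    induction i using Nat.twoStepInduction with
    | zero => simp [hN0]
    | one => simp [hN1]
    | more n ih1 ih2 =>
      rw [hN, hN]
      exact Nat.add_le_add (Nat.mul_le_mul_left _ ih2)
        (Nat.mul_le_mul hz ih1)
  have strict : ∀ z₁ z₂, z₁ < z₂ →
      ∑ i ∈ Finset.range (k + 1), N z₁ i < ∑ i ∈ Finset.range (k + 1), N z₂ i := by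
    intro z₁ z₂ hz
    apply Finset.sum_lt_sum (fun i _ => mono z₁ z₂ hz.le i)
    refine ⟨2, Finset.mem_range.2 (by omega), ?_⟩
    rw [hN, hN, hN0, hN0, hN1, hN1]
    have h1 : z₁ * 1 < z₂ * 1 := by simpa using hz
    omega
  refine ⟨fun z₁ z₂ hz _ => strict z₁ z₂ hz, fun z hz => ?_⟩
  rcases eq_or_lt_of_le hz with rfl | h
  · exact le_refl _
  · exact (strict z d h).le
end
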